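/- Combining Pinsker's inequality with the KL-gap bound: if λ* maximizes L with E_{p_{λ*}}[Q] = θ, Q takes values in [0,1]^l, and L(λ) ≥ L(λ*) − ε, then for each i, |E_{p_λ}[Q_i] − θ_i| ≤ √(ε/2). -/

import Mathlib

/-!
For the Gibbs distributions `p_λ ∝ exp ⟪λ, Q⟫` one has
`KL(p_λ* ‖ p_λ) = ⟪λ* - λ, E_{p_λ*} Q⟫ - log Z(λ*) + log Z(λ)`, which under the moment condition
`E_{p_λ*} Q = θ` is exactly the likelihood gap `L(λ*) - L(λ) ≤ ε`. Pinsker's inequality turns this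
into `‖p_λ* - p_λ‖₁ ≤ √(2ε)`, and the mean of an observable with values in `[0, 1]` moves by at
most half the `ℓ¹` distance. Pinsker itself follows from the pointwise bound
`3 (x - y)² ≤ 2 (x + 2y) (x log (x / y) - x + y)` by Cauchy–Schwarz with the probability weights
`(p ω + 2 q ω) / 3`.
-/

open scoped RealInnerProductSpace
open Real Set

theorem le_of_hasDerivAt_of_sub_mul_nonneg {f f' : ℝ → ℝ} {a x : ℝ}
    (hf : ∀ y ∈ uIcc a x, HasDerivAt f (f' y) y) (hsign : ∀ y ∈ uIcc a x, 0 ≤ (y - a) * f' y) :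
    f a ≤ f x := by
  have hcont {u v : ℝ} (huv : uIcc u v = uIcc a x) : ContinuousOn f (Icc u v) := fun y hy =>
    (hf y (huv ▸ Icc_subset_uIcc hy)).continuousAt.continuousWithinAt
  rcases lt_trichotomy a x with hax | rfl | hxa
  · obtain ⟨c, hc, hslope⟩ := exists_hasDerivAt_eq_slope f f' hax (hcont rfl)
      fun y hy => hf y (Ioo_subset_Icc_self.trans Icc_subset_uIcc hy)
    have hc' : 0 ≤ f' c := nonneg_of_mul_nonneg_right
      (hsign c (Icc_subset_uIcc (Ioo_subset_Icc_self hc))) (by linarith [hc.1])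
    rw [eq_div_iff (sub_ne_zero.2 hax.ne')] at hslope
    nlinarith
  · exact le_rfl
  · obtain ⟨c, hc, hslope⟩ := exists_hasDerivAt_eq_slope f f' hxa (hcont (uIcc_comm x a))
      fun y hy => hf y (Ioo_subset_Icc_self.trans Icc_subset_uIcc' hy)
    have hc' : f' c ≤ 0 := nonpos_of_mul_nonneg_right
      (hsign c (Icc_subset_uIcc' (Ioo_subset_Icc_self hc))) (by linarith [hc.2])
    rw [eq_div_iff (sub_ne_zero.2 hxa.ne')] at hslope
    nlinarith

theorem Real.sub_one_mul_five_mul_add_one_le_mul_log {t : ℝ} (ht : 0 < t) :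
    (t - 1) * (5 * t + 1) ≤ 2 * t * (t + 2) * log t := by
  let g : ℝ → ℝ := fun y => log y - (y - 1) * (5 * y + 1) / (2 * y * (y + 2))
  have hpos : ∀ y ∈ uIcc 1 t, 0 < y := fun y hy =>
    lt_of_lt_of_le (lt_min one_pos ht) hy.1
  have hderiv : ∀ y ∈ uIcc 1 t, HasDerivAt g ((y - 1) ^ 3 / (y ^ 2 * (y + 2) ^ 2)) y := by
    intro y hy
    have hy := hpos y hy
    have hnum : HasDerivAt (fun y : ℝ => (y - 1) * (5 * y + 1)) (10 * y - 4) y :=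
      (((hasDerivAt_id y).sub_const 1).mul
        (((hasDerivAt_id y).const_mul 5).add_const 1)).congr_deriv (by simp only [id_eq]; ring)
    have hden : HasDerivAt (fun y : ℝ => 2 * y * (y + 2)) (4 * y + 4) y :=
      (((hasDerivAt_id y).const_mul 2).mul ((hasDerivAt_id y).add_const 2)).congr_deriv
        (by simp only [id_eq]; ring)
    exact ((hasDerivAt_log hy.ne').sub (hnum.div hden (by positivity))).congr_deriv
      (by field_simp; ring)
  have hg : g 1 ≤ g t := le_of_hasDerivAt_of_sub_mul_nonneg hderiv fun y hy => by
    have := hpos y hy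
    have hsq : (y - 1) * ((y - 1) ^ 3 / (y ^ 2 * (y + 2) ^ 2))
        = (y - 1) ^ 4 / (y ^ 2 * (y + 2) ^ 2) := by ring
    rw [hsq]
    positivity
  have hg1 : g 1 = 0 := by norm_num [g]
  have hg' : (t - 1) * (5 * t + 1) / (2 * t * (t + 2)) ≤ log t := by linarith
  rwa [div_le_iff₀ (by positivity), mul_comm (log t)] at hg'

theorem Real.three_mul_sq_sub_le_two_mul_mul_log_div {x y : ℝ} (hx : 0 ≤ x) (hy : 0 < y) :
    3 * (x - y) ^ 2 ≤ 2 * (x + 2 * y) * (x * log (x / y) - x + y) := by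
  rcases hx.eq_or_lt with rfl | hx
  · nlinarith
  obtain ⟨t, ht, rfl⟩ : ∃ t, 0 < t ∧ x = t * y :=
    ⟨x / y, div_pos hx hy, (div_mul_cancel₀ x hy.ne').symm⟩
  rw [mul_div_assoc, div_self hy.ne', mul_one]
  nlinarith [mul_le_mul_of_nonneg_right (sub_one_mul_five_mul_add_one_le_mul_log ht) (sq_nonneg y)]

section FiniteDistributions

variable {ι : Type*} [Fintype ι] {p q : ι → ℝ}

theorem sq_sum_abs_sub_le_two_mul_sum_mul_log_div (hp : ∀ i, 0 ≤ p i) (hq : ∀ i, 0 < q i)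
    (hp1 : ∑ i, p i = 1) (hq1 : ∑ i, q i = 1) :
    (∑ i, |p i - q i|) ^ 2 ≤ 2 * ∑ i, p i * log (p i / q i) := by
  set w : ι → ℝ := fun i => (p i + 2 * q i) / 3
  have hw : ∀ i, 0 < w i := fun i => by have := hp i; have := hq i; positivity
  have hw1 : ∑ i, w i = 1 := by
    simp only [w, ← Finset.sum_div, Finset.sum_add_distrib, ← Finset.mul_sum, hp1, hq1]
    norm_num
  calc (∑ i, |p i - q i|) ^ 2 = (∑ i, |p i - q i|) ^ 2 / ∑ i, w i := by rw [hw1, div_one]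
    _ ≤ ∑ i, |p i - q i| ^ 2 / w i := Finset.sq_sum_div_le_sum_sq_div _ _ fun i _ => hw i
    _ ≤ ∑ i, 2 * (p i * log (p i / q i) - p i + q i) := by
        gcongr with i
        rw [div_le_iff₀ (hw i), sq_abs]
        simp only [w]
        linarith [three_mul_sq_sub_le_two_mul_mul_log_div (hp i) (hq i)]
    _ = 2 * ∑ i, p i * log (p i / q i) := by
        rw [← Finset.mul_sum, Finset.sum_add_distrib, Finset.sum_sub_distrib, hp1, hq1]
        ring

theorem abs_sum_mul_sub_sum_mul_le {f : ι → ℝ} {a b : ℝ} (hf : ∀ i, f i ∈ Icc a b)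
    (hpq : ∑ i, p i = ∑ i, q i) :
    |∑ i, p i * f i - ∑ i, q i * f i| ≤ (b - a) / 2 * ∑ i, |p i - q i| := by
  have hcentered : ∑ i, p i * f i - ∑ i, q i * f i = ∑ i, (p i - q i) * (f i - (a + b) / 2) := by
    simp only [sub_mul, mul_sub, Finset.sum_sub_distrib, ← Finset.sum_mul, hpq]
    ring
  calc |∑ i, p i * f i - ∑ i, q i * f i|
      ≤ ∑ i, |p i - q i| * |f i - (a + b) / 2| := by
        rw [hcentered]
        simpa only [abs_mul] using
          Finset.abs_sum_le_sum_abs (fun i => (p i - q i) * (f i - (a + b) / 2)) Finset.univ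
    _ ≤ ∑ i, |p i - q i| * ((b - a) / 2) := by
        gcongr with i
        obtain ⟨hfa, hfb⟩ := hf i
        rw [abs_le]
        constructor <;> linarith
    _ = (b - a) / 2 * ∑ i, |p i - q i| := by rw [← Finset.sum_mul, mul_comm]

theorem abs_sum_mul_sub_sum_mul_le_sqrt {f : ι → ℝ} {a b : ℝ} (hf : ∀ i, f i ∈ Icc a b)
    (hp : ∀ i, 0 ≤ p i) (hq : ∀ i, 0 < q i) (hp1 : ∑ i, p i = 1) (hq1 : ∑ i, q i = 1) :
    |∑ i, p i * f i - ∑ i, q i * f i| ≤ (b - a) * √((∑ i, p i * log (p i / q i)) / 2) := by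
  obtain ⟨i, -, -⟩ := Finset.exists_ne_zero_of_sum_ne_zero (hp1.trans_ne one_ne_zero)
  have hab : 0 ≤ b - a := sub_nonneg.2 ((hf i).1.trans (hf i).2)
  have hpinsker := sq_sum_abs_sub_le_two_mul_sum_mul_log_div hp hq hp1 hq1
  calc |∑ i, p i * f i - ∑ i, q i * f i| ≤ (b - a) / 2 * ∑ i, |p i - q i| :=
        abs_sum_mul_sub_sum_mul_le hf (hp1.trans hq1.symm)
    _ ≤ (b - a) / 2 * √(2 * ∑ i, p i * log (p i / q i)) := by
        gcongr
        exact le_sqrt_of_sq_le hpinsker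
    _ = (b - a) * √((∑ i, p i * log (p i / q i)) / 2) := by
        rw [show 2 * ∑ i, p i * log (p i / q i) = 2 ^ 2 * ((∑ i, p i * log (p i / q i)) / 2) by
          ring, sqrt_mul (by positivity), sqrt_sq zero_le_two]
        ring

end FiniteDistributions

section GibbsFamily

variable {Ω E : Type*} [Fintype Ω] [Nonempty Ω] [NormedAddCommGroup E] [InnerProductSpace ℝ E]
  (Q : Ω → E)

noncomputable def partitionFunction (lam : E) : ℝ := ∑ ω, exp ⟪lam, Q ω⟫

noncomputable def gibbs (lam : E) (ω : Ω) : ℝ := exp ⟪lam, Q ω⟫ / partitionFunction Q lam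

theorem partitionFunction_pos (lam : E) : 0 < partitionFunction Q lam :=
  Finset.sum_pos (fun _ _ => exp_pos _) Finset.univ_nonempty

theorem gibbs_pos (lam : E) (ω : Ω) : 0 < gibbs Q lam ω :=
  div_pos (exp_pos _) (partitionFunction_pos Q lam)

theorem sum_gibbs (lam : E) : ∑ ω, gibbs Q lam ω = 1 := by
  simp only [gibbs, ← Finset.sum_div]
  exact div_self (partitionFunction_pos Q lam).ne'

theorem log_gibbs (lam : E) (ω : Ω) :
    log (gibbs Q lam ω) = ⟪lam, Q ω⟫ - log (partitionFunction Q lam) := by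
  rw [gibbs, log_div (exp_pos _).ne' (partitionFunction_pos Q lam).ne', log_exp]

theorem sum_gibbs_mul_log_gibbs_div_gibbs (a b : E) :
    ∑ ω, gibbs Q a ω * log (gibbs Q a ω / gibbs Q b ω)
      = ⟪a - b, ∑ ω, gibbs Q a ω • Q ω⟫ - log (partitionFunction Q a)
        + log (partitionFunction Q b) := by
  have hlog : ∀ ω, log (gibbs Q a ω / gibbs Q b ω)
      = ⟪a - b, Q ω⟫ + (log (partitionFunction Q b) - log (partitionFunction Q a)) := fun ω => by
    rw [log_div (gibbs_pos Q a ω).ne' (gibbs_pos Q b ω).ne', log_gibbs, log_gibbs, inner_sub_left]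
    ring
  simp only [hlog, mul_add, Finset.sum_add_distrib, ← Finset.sum_mul, sum_gibbs, inner_sum,
    real_inner_smul_right]
  ring

end GibbsFamily

theorem marginal_error_from_likelihood_gap_general
    {Ω : Type*} [Fintype Ω] [Nonempty Ω] {l : ℕ}
    (Q : Ω → EuclideanSpace ℝ (Fin l)) (hQ : ∀ ω i, Q ω i ∈ Set.Icc (0:ℝ) 1)
    (θ : EuclideanSpace ℝ (Fin l))
    (L : EuclideanSpace ℝ (Fin l) → ℝ)
    (hL : ∀ lam, L lam = ⟪lam, θ⟫ - Real.log (∑ ω, Real.exp ⟪lam, Q ω⟫))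
    (p : EuclideanSpace ℝ (Fin l) → Ω → ℝ)
    (hp : ∀ lam ω, p lam ω = Real.exp ⟪lam, Q ω⟫ / ∑ ω', Real.exp ⟪lam, Q ω'⟫)
    (lamStar : EuclideanSpace ℝ (Fin l))
    (hfoc : ∑ ω, p lamStar ω • Q ω = θ)
    (ε : ℝ)
    (lam : EuclideanSpace ℝ (Fin l)) (hlam : L lamStar - L lam ≤ ε) :
    ∀ i, |(∑ ω, p lam ω * Q ω i) - θ i| ≤ Real.sqrt (ε / 2) := by
  intro i
  obtain rfl : p = gibbs Q := funext₂ hp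
  have hθ : θ i = ∑ ω, gibbs Q lamStar ω * Q ω i := by simp [← hfoc]
  have hKL : ∑ ω, gibbs Q lamStar ω * log (gibbs Q lamStar ω / gibbs Q lam ω) ≤ ε := by
    rw [sum_gibbs_mul_log_gibbs_div_gibbs, hfoc, inner_sub_left]
    rw [hL, hL] at hlam
    unfold partitionFunction
    linarith
  rw [hθ, abs_sub_comm]
  calc _ ≤ (1 - 0) * √((∑ ω, gibbs Q lamStar ω * log (gibbs Q lamStar ω / gibbs Q lam ω)) / 2) :=
        abs_sum_mul_sub_sum_mul_le_sqrt (hQ · i) (fun ω => (gibbs_pos Q lamStar ω).le)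
          (gibbs_pos Q lam) (sum_gibbs Q lamStar) (sum_gibbs Q lam)
    _ ≤ √(ε / 2) := by rw [sub_zero, one_mul]; gcongr

theorem marginal_error_from_likelihood_gap
    {Ω : Type*} [Fintype Ω] [Nonempty Ω] {l : ℕ}
    (Q : Ω → EuclideanSpace ℝ (Fin l)) (hQ : ∀ ω i, Q ω i ∈ Set.Icc (0:ℝ) 1)
    (θ : EuclideanSpace ℝ (Fin l))
    (L : EuclideanSpace ℝ (Fin l) → ℝ)
    (hL : ∀ lam, L lam = ⟪lam, θ⟫ - Real.log (∑ ω, Real.exp ⟪lam, Q ω⟫))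
    (p : EuclideanSpace ℝ (Fin l) → Ω → ℝ)
    (hp : ∀ lam ω, p lam ω = Real.exp ⟪lam, Q ω⟫ / ∑ ω', Real.exp ⟪lam, Q ω'⟫)
    (lamStar : EuclideanSpace ℝ (Fin l))
    (hmax : ∀ lam, L lam ≤ L lamStar)
    (hfoc : ∑ ω, p lamStar ω • Q ω = θ)
    (ε : ℝ) (hε : 0 ≤ ε)
    (lam : EuclideanSpace ℝ (Fin l)) (hlam : L lamStar - L lam ≤ ε) :
    ∀ i, |(∑ ω, p lam ω * Q ω i) - θ i| ≤ Real.sqrt (ε / 2) :=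
  marginal_error_from_likelihood_gap_general Q hQ θ L hL p hp lamStar hfoc ε lam hlam
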